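/- Let σ > 0, 0 ≤ a and C > 0 with a + C ≤ 1, and define the slab base classifier f* : ℝ^d → {0,1} by f*(z) = 1 if σΦ⁻¹(a) ≤ z₁ ≤ σΦ⁻¹(a + C) and f*(z) = 0 otherwise. Then the Gaussian-smoothed function p(x) := E_{ε ~ N(0,σ²I_d)}[f*(x + ε)] satisfies: p(0) = C; ∇ₓ p(0) = −σ⁻¹(Φ'(Φ⁻¹(a + C)) − Φ'(Φ⁻¹(a))) e₁ where e₁ is the first standard basis vector; and for every ρ ≥ 0, p(ρ e₁) = Φ(Φ⁻¹(a + C) − ρ/σ) − Φ(Φ⁻¹(a) − ρ/σ). In particular, the second-order smoothing lower bound is attained with equality by this classifier. -/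

import Mathlib

open MeasureTheory ProbabilityTheory Real

noncomputable section

/-- The standard normal cumulative distribution function Φ. -/
def Phi (x : ℝ) : ℝ := ((gaussianReal 0 1) (Set.Iic x)).toReal

/-- The inverse Φ⁻¹ of the standard normal CDF (meaningful on (0,1)). -/
def PhiInv : ℝ → ℝ := Function.invFun Phi

/-- The standard normal probability density function Φ'. -/
def stdPdf (x : ℝ) : ℝ := Real.exp (-x ^ 2 / 2) / Real.sqrt (2 * Real.pi)

/-- `Φ(Φ⁻¹(y) - c)` with the conventions `Φ⁻¹(0) = -∞`, `Φ⁻¹(1) = +∞`,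
`Φ(-∞ - c) = 0`, `Φ(+∞ - c) = 1`. -/
def PhiShift (c y : ℝ) : ℝ := if y ≤ 0 then 0 else if 1 ≤ y then 1 else Phi (PhiInv y - c)

/-- `Φ'(Φ⁻¹(y))` with the conventions `Φ⁻¹(0) = -∞`, `Φ⁻¹(1) = +∞`, `Φ'(±∞) = 0`. -/
def pdfAtQuantile (y : ℝ) : ℝ := if y ≤ 0 then 0 else if 1 ≤ y then 0 else stdPdf (PhiInv y)

/-- The isotropic Gaussian measure `N(0, σ²I_d)` on `ℝ^d`. -/
def gaussPi (σ : ℝ) (d : ℕ) : Measure (EuclideanSpace ℝ (Fin d)) :=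
  Measure.map (MeasurableEquiv.toLp 2 (Fin d → ℝ))
    (Measure.pi fun _ : Fin d => gaussianReal 0 (Real.toNNReal (σ ^ 2)))

/-- The Gaussian-smoothed function `p_a(x) = E_{ε ~ N(0,σ²I_d)}[f(x+ε)]`. -/
def smoothed (σ : ℝ) (d : ℕ) (f : EuclideanSpace ℝ (Fin d) → ℝ)
    (x : EuclideanSpace ℝ (Fin d)) : ℝ := ∫ ε, f (x + ε) ∂(gaussPi σ d)

/-- A centered real random variable `Z` is `(a,b)`-subexponential if `E[Z] = 0` and
`E[exp (l Z)] ≤ exp (a² l² / 2)` for all `|l| ≤ 1/b`. -/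
def IsSubexponential {Ω : Type*} [MeasurableSpace Ω] (μ : Measure Ω) (Z : Ω → ℝ)
    (a b : ℝ) : Prop :=
  (∫ ω, Z ω ∂μ) = 0 ∧
    ∀ l : ℝ, |l| ≤ 1 / b → (∫ ω, Real.exp (l * Z ω) ∂μ) ≤ Real.exp (a ^ 2 * l ^ 2 / 2)

/-!
`f*` only sees `z₁` and is the indicator of the slab `[σΦ⁻¹(a), σΦ⁻¹(a+C)]`, so `p(x)` is the
`N(0,σ²)`-mass of that slab shifted by `x₁`. The slab is the intersection of two half-lines that
together cover `ℝ`, so inclusion–exclusion gives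
`p(x) = Φ(Φ⁻¹(a+C) - x₁/σ) - Φ(Φ⁻¹(a) - x₁/σ)`. The three claims follow by evaluating at `0`,
by the chain rule with `Φ' = stdPdf`, and by evaluating at `ρe₁`.
-/

lemma Phi_eq_cdf : Phi = cdf (gaussianReal 0 1) :=
  funext fun x => (cdf_eq_real _ x).symm

lemma stdPdf_eq_gaussianPDFReal : stdPdf = gaussianPDFReal 0 1 := by
  funext x
  simp [stdPdf, gaussianPDFReal, div_eq_inv_mul]

lemma continuous_stdPdf : Continuous stdPdf := by
  unfold stdPdf
  fun_prop

lemma integrable_stdPdf : Integrable stdPdf :=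
  stdPdf_eq_gaussianPDFReal ▸ integrable_gaussianPDFReal 0 1

lemma Phi_eq_integral_Iic (x : ℝ) : Phi x = ∫ t in Set.Iic x, stdPdf t := by
  rw [Phi, gaussianReal_apply_eq_integral 0 one_ne_zero, ENNReal.toReal_ofReal
    (setIntegral_nonneg measurableSet_Iic fun t _ => gaussianPDFReal_nonneg 0 1 t),
    stdPdf_eq_gaussianPDFReal]

lemma hasDerivAt_Phi (x : ℝ) : HasDerivAt Phi (stdPdf x) x := by
  have hPhi : Phi = fun y => Phi 0 + ∫ t in (0 : ℝ)..y, stdPdf t := by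
    funext y
    rw [← intervalIntegral.integral_Iic_sub_Iic integrable_stdPdf.integrableOn
      integrable_stdPdf.integrableOn, Phi_eq_integral_Iic, Phi_eq_integral_Iic]
    ring
  rw [hPhi]
  exact (intervalIntegral.integral_hasDerivAt_right integrable_stdPdf.intervalIntegrable
    continuous_stdPdf.stronglyMeasurable.stronglyMeasurableAtFilter
    continuous_stdPdf.continuousAt).const_add _

lemma continuous_Phi : Continuous Phi :=
  continuous_iff_continuousAt.2 fun x => (hasDerivAt_Phi x).continuousAt

lemma Phi_PhiInv {y : ℝ} (h0 : 0 < y) (h1 : y < 1) : Phi (PhiInv y) = y := by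
  apply Function.invFun_eq
  obtain ⟨b, hb⟩ := ((Phi_eq_cdf ▸ tendsto_cdf_atTop _).eventually (lt_mem_nhds h1)).exists
  obtain ⟨a, ha⟩ := ((Phi_eq_cdf ▸ tendsto_cdf_atBot _).eventually (gt_mem_nhds h0)).exists
  exact intermediate_value_univ a b continuous_Phi ⟨ha.le, hb.le⟩

lemma PhiInv_le_PhiInv {y y' : ℝ} (h0 : 0 < y) (h1 : y' < 1) (h : y ≤ y') :
    PhiInv y ≤ PhiInv y' := by
  by_contra! hlt
  have := Phi_eq_cdf ▸ monotone_cdf (gaussianReal 0 1) hlt.le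
  rw [Phi_PhiInv h0 (h.trans_lt h1), Phi_PhiInv (h0.trans_le h) h1] at this
  exact hlt.ne (by rw [le_antisymm h this])

lemma PhiShift_zero {y : ℝ} (h0 : 0 ≤ y) (h1 : y ≤ 1) : PhiShift 0 y = y := by
  unfold PhiShift
  split_ifs with hy0 hy1
  · exact (le_antisymm hy0 h0).symm
  · exact (le_antisymm h1 hy1).symm
  · rw [sub_zero, Phi_PhiInv (not_le.1 hy0) (not_le.1 hy1)]

lemma hasDerivAt_PhiShift_div {σ : ℝ} (y : ℝ) :
    HasDerivAt (fun s => PhiShift (s / σ) y) (-σ⁻¹ * pdfAtQuantile y) 0 := by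
  unfold PhiShift pdfAtQuantile
  split_ifs with hy0 hy1
  · simpa using hasDerivAt_const (0 : ℝ) (0 : ℝ)
  · simpa using hasDerivAt_const (0 : ℝ) (1 : ℝ)
  · have hinner : HasDerivAt (fun s => PhiInv y - s / σ) (-σ⁻¹) 0 := by
      simpa [one_div] using ((hasDerivAt_id (0 : ℝ)).div_const σ).const_sub (PhiInv y)
    simpa [mul_comm, Function.comp_def] using (hasDerivAt_Phi (PhiInv y - 0 / σ)).comp 0 hinner

lemma gaussianReal_sq_eq_map_const_mul (σ : ℝ) :
    gaussianReal 0 (σ ^ 2).toNNReal = (gaussianReal 0 1).map (σ * ·) := by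
  rw [gaussianReal_map_const_mul, mul_zero, mul_one]
  congr
  ext
  simp [sq_nonneg]

lemma gaussianReal_real_Iic {σ : ℝ} (hσ : 0 < σ) (b : ℝ) :
    (gaussianReal 0 (σ ^ 2).toNNReal).real (Set.Iic b) = Phi (b / σ) := by
  have hpre : (σ * ·) ⁻¹' Set.Iic b = Set.Iic (b / σ) := by
    ext t
    simp [le_div_iff₀ hσ, mul_comm]
  rw [gaussianReal_sq_eq_map_const_mul, map_measureReal_apply (measurable_const_mul σ)
    measurableSet_Iic, hpre]
  rfl

lemma gaussianReal_real_Ici {σ : ℝ} (hσ : 0 < σ) (b : ℝ) :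
    (gaussianReal 0 (σ ^ 2).toNNReal).real (Set.Ici b) = 1 - Phi (b / σ) := by
  have := nullSingletonClass_gaussianReal (μ := 0) (v := (σ ^ 2).toNNReal) (by positivity)
  rw [← Set.compl_Iio, measureReal_compl measurableSet_Iio, probReal_univ,
    measureReal_congr Iio_ae_eq_Iic, gaussianReal_real_Iic hσ]

/-- `Set.Ici (σ * Φ⁻¹ y)`, read with the convention `Φ⁻¹ 0 = -∞` for `y ≤ 0`. -/
def quantileIci (σ y : ℝ) : Set ℝ := {u | y ≤ 0 ∨ σ * PhiInv y ≤ u}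

/-- `Set.Iic (σ * Φ⁻¹ y)`, read with the convention `Φ⁻¹ 1 = +∞` for `1 ≤ y`. -/
def quantileIic (σ y : ℝ) : Set ℝ := {u | 1 ≤ y ∨ u ≤ σ * PhiInv y}

lemma measurableSet_quantileIci (σ y : ℝ) : MeasurableSet (quantileIci σ y) :=
  (MeasurableSet.const _).union measurableSet_Ici

lemma measurableSet_quantileIic (σ y : ℝ) : MeasurableSet (quantileIic σ y) :=
  (MeasurableSet.const _).union measurableSet_Iic

lemma quantileIci_union_quantileIic {σ y y' : ℝ} (hσ : 0 ≤ σ) (h : y ≤ y') :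
    quantileIci σ y ∪ quantileIic σ y' = Set.univ := by
  refine Set.eq_univ_of_forall fun u => ?_
  by_cases hy : y ≤ 0
  · exact Or.inl (Or.inl hy)
  by_cases hy' : 1 ≤ y'
  · exact Or.inr (Or.inl hy')
  have hq := mul_le_mul_of_nonneg_left
    (PhiInv_le_PhiInv (not_le.1 hy) (not_le.1 hy') h) hσ
  rcases le_total (σ * PhiInv y) u with hu | hu
  · exact Or.inl (Or.inr hu)
  · exact Or.inr (Or.inr (hu.trans hq))

lemma gaussianReal_real_preimage_add_quantileIic {σ y : ℝ} (hσ : 0 < σ) (hy : 0 < y) (x : ℝ) :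
    (gaussianReal 0 (σ ^ 2).toNNReal).real ((x + ·) ⁻¹' quantileIic σ y) = PhiShift (x / σ) y := by
  unfold PhiShift
  rw [if_neg hy.not_ge]
  by_cases hy1 : 1 ≤ y
  · have huniv : (x + ·) ⁻¹' quantileIic σ y = Set.univ :=
      Set.eq_univ_of_forall fun _ => Or.inl hy1
    rw [huniv, probReal_univ, if_pos hy1]
  · have hIic : (x + ·) ⁻¹' quantileIic σ y = Set.Iic (σ * PhiInv y - x) := by
      ext t
      simp [quantileIic, hy1, le_sub_iff_add_le']
    rw [hIic, gaussianReal_real_Iic hσ, if_neg hy1]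
    field_simp

lemma gaussianReal_real_preimage_add_quantileIci {σ y : ℝ} (hσ : 0 < σ) (hy : y < 1) (x : ℝ) :
    (gaussianReal 0 (σ ^ 2).toNNReal).real ((x + ·) ⁻¹' quantileIci σ y) =
      1 - PhiShift (x / σ) y := by
  unfold PhiShift
  rw [if_neg (not_le.2 hy)]
  by_cases hy0 : y ≤ 0
  · have huniv : (x + ·) ⁻¹' quantileIci σ y = Set.univ :=
      Set.eq_univ_of_forall fun _ => Or.inl hy0
    rw [huniv, probReal_univ, if_pos hy0, sub_zero]
  · have hIci : (x + ·) ⁻¹' quantileIci σ y = Set.Ici (σ * PhiInv y - x) := by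
      ext t
      simp [quantileIci, hy0, add_comm]
    rw [hIci, gaussianReal_real_Ici hσ, if_neg hy0]
    field_simp

lemma gaussPi_map_apply (σ : ℝ) {d : ℕ} (i : Fin d) :
    (gaussPi σ d).map (fun x => x i) = gaussianReal 0 (σ ^ 2).toNNReal := by
  rw [gaussPi, Measure.map_map (by fun_prop) (by fun_prop)]
  exact (measurePreserving_eval _ i).map_eq

lemma smoothed_indicator_apply (σ : ℝ) {d : ℕ} (i : Fin d) {S : Set ℝ} (hS : MeasurableSet S)
    (x : EuclideanSpace ℝ (Fin d)) :
    smoothed σ d (fun z => S.indicator 1 (z i)) x =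
      (gaussianReal 0 (σ ^ 2).toNNReal).real ((x i + ·) ⁻¹' S) := by
  have hS' : MeasurableSet ((x i + ·) ⁻¹' S) := hS.preimage (measurable_const_add _)
  rw [← integral_indicator_one hS', ← gaussPi_map_apply σ i,
    integral_map (by fun_prop) (measurable_one.indicator hS').aestronglyMeasurable]
  rfl

lemma smoothed_quantile_slab {σ y y' : ℝ} (hσ : 0 < σ) (hy : y < 1) (hy' : 0 < y') (h : y ≤ y')
    {d : ℕ} (i : Fin d) (x : EuclideanSpace ℝ (Fin d)) :
    smoothed σ d (fun z => (quantileIci σ y ∩ quantileIic σ y').indicator 1 (z i)) x =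
      PhiShift (x i / σ) y' - PhiShift (x i / σ) y := by
  have hunion := measureReal_union_add_inter (μ := gaussianReal 0 (σ ^ 2).toNNReal)
    ((measurableSet_quantileIic σ y').preimage (measurable_const_add (x i)))
    (s := (x i + ·) ⁻¹' quantileIci σ y)
  rw [← Set.preimage_union, quantileIci_union_quantileIic hσ.le h, Set.preimage_univ,
    probReal_univ, gaussianReal_real_preimage_add_quantileIci hσ hy,
    gaussianReal_real_preimage_add_quantileIic hσ hy'] at hunion
  rw [smoothed_indicator_apply σ i
    ((measurableSet_quantileIci σ y).inter (measurableSet_quantileIic σ y')), Set.preimage_inter]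
  linarith

lemma hasGradientAt_apply_comp {ι : Type*} [Fintype ι] [DecidableEq ι] {g : ℝ → ℝ} {g' : ℝ}
    (i : ι) {x : EuclideanSpace ℝ ι} (hg : HasDerivAt g g' (x i)) :
    HasGradientAt (fun z => g (z i)) (g' • EuclideanSpace.single i 1) x := by
  have hdual : InnerProductSpace.toDual ℝ (EuclideanSpace ℝ ι) (g' • EuclideanSpace.single i 1) =
      g' • (EuclideanSpace.proj i : EuclideanSpace ℝ ι →L[ℝ] ℝ) := by
    ext v
    simp [EuclideanSpace.inner_single_left]
  rw [hasGradientAt_iff_hasFDerivAt, hdual]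
  exact hg.comp_hasFDerivAt x (EuclideanSpace.proj i : EuclideanSpace ℝ ι →L[ℝ] ℝ).hasFDerivAt

/-- tightness: the slab classifier attains the second-order bound:
for the base classifier `f*(z) = 1 iff σΦ⁻¹(a) ≤ z₁ ≤ σΦ⁻¹(a+C)` (with the conventions
`Φ⁻¹(0) = -∞`, `Φ⁻¹(1) = +∞`), the smoothed function satisfies `p(0) = C`,
`∇p(0) = -σ⁻¹(Φ'(Φ⁻¹(a+C)) - Φ'(Φ⁻¹(a))) e₁`, and
`p(ρe₁) = Φ(Φ⁻¹(a+C) - ρ/σ) - Φ(Φ⁻¹(a) - ρ/σ)` for every `ρ ≥ 0`. -/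
theorem slab_classifier_attains_bound (d : ℕ) (hd : 0 < d) (σ a C : ℝ)
    (hσ : 0 < σ) (ha : 0 ≤ a) (hC : 0 < C) (haC : a + C ≤ 1)
    (fstar : EuclideanSpace ℝ (Fin d) → ℝ)
    (hfstar : ∀ z, fstar z =
      if (a ≤ 0 ∨ σ * PhiInv a ≤ z ⟨0, hd⟩) ∧ (1 ≤ a + C ∨ z ⟨0, hd⟩ ≤ σ * PhiInv (a + C))
      then 1 else 0) :
    smoothed σ d fstar 0 = C ∧
    gradient (smoothed σ d fstar) 0 =
      (-σ⁻¹ * (pdfAtQuantile (a + C) - pdfAtQuantile a)) • EuclideanSpace.single ⟨0, hd⟩ (1 : ℝ) ∧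
    ∀ ρ : ℝ, 0 ≤ ρ →
      smoothed σ d fstar (ρ • EuclideanSpace.single ⟨0, hd⟩ (1 : ℝ)) =
        PhiShift (ρ / σ) (a + C) - PhiShift (ρ / σ) a := by
  set i : Fin d := ⟨0, hd⟩
  have hslab : fstar = fun z => (quantileIci σ a ∩ quantileIic σ (a + C)).indicator 1 (z i) := by
    funext z
    simp [hfstar, Set.indicator_apply, quantileIci, quantileIic]
  have hp : smoothed σ d fstar = fun x => PhiShift (x i / σ) (a + C) - PhiShift (x i / σ) a :=
    hslab ▸ funext (smoothed_quantile_slab hσ (by linarith) (by linarith) (by linarith) i)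
  have hderiv : HasDerivAt (fun s => PhiShift (s / σ) (a + C) - PhiShift (s / σ) a)
      (-σ⁻¹ * pdfAtQuantile (a + C) - -σ⁻¹ * pdfAtQuantile a) ((0 : EuclideanSpace ℝ (Fin d)) i) :=
    (hasDerivAt_PhiShift_div (a + C)).sub (hasDerivAt_PhiShift_div a)
  refine ⟨?_, ?_, fun ρ _ => ?_⟩
  · simp [hp, PhiShift_zero ha (by linarith : a ≤ 1), PhiShift_zero (by linarith) haC]
  · rw [hp, mul_sub]
    exact (hasGradientAt_apply_comp i hderiv).gradient
  · simp [hp, i]
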